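/- arXiv:1708.03936 — 2 statements merged into one kernel-verified Lean document; each statement's English description precedes it below -/
import Mathlib

section
/- For any X ⊆ ℝⁿ and A ⊆ ℝ, the algebraic trace part of X over A admits the alternative expression X^{alg_A}_t = ⋃{Y ⊆ X : cl(Y) is an A-set}. -/
open FirstOrder FirstOrder.Language Set Polynomial

noncomputable section

/-! ## Background definitions -/

/-! ### The real ordered field as a first-order structure -/

/-- The language of the real ordered field `⟨ℝ, <, +, ·⟩`: ring symbols together with an
order symbol. -/
abbrev realFieldLang : FirstOrder.Language := Language.ring.sum Language.order

instance : Language.ring.Structure ℝ :=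
  (FirstOrder.Ring.compatibleRingOfRing ℝ).toStructure

instance : Language.order.Structure ℝ :=
  Language.orderStructure (M := ℝ)

/-- A set `X ⊆ ℝ^α` is semialgebraic with parameters from `A`, i.e. definable with
parameters from `A` in the real ordered field `⟨ℝ, <, +, ·⟩`. -/
def SemialgebraicOn (A : Set ℝ) {α : Type} (X : Set (α → ℝ)) : Prop :=
  A.Definable realFieldLang X

/-- The set of real numbers that are rational, used as the parameter set `ℚ ⊆ ℝ`. -/
def ratParams : Set ℝ := Set.range ((↑) : ℚ → ℝ)

/-! ### The language with one extra unary predicate, and pairs `⟨𝓡, P⟩` -/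

/-- The language consisting of a single unary relation symbol. -/
def predLang : FirstOrder.Language where
  Functions := fun _ => Empty
  Relations := fun n => match n with
    | 1 => PUnit
    | _ => Empty

/-- The `predLang`-structure on `ℝ` interpreting the unary predicate as `P`. -/
def predStructure (P : Set ℝ) : predLang.Structure ℝ where
  funMap := fun {_} f _ => f.elim
  RelMap := fun {n} r x =>
    match n, r with
    | 1, _ => x 0 ∈ P

/-- `X` is definable (with parameters from `A`) in the expansion `⟨𝓡, P⟩` of the structure
`𝓡` (with language `L`) by a unary predicate for `P`. -/
def DefinablePair (L : FirstOrder.Language) [L.Structure ℝ] (P : Set ℝ) (A : Set ℝ)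
    {α : Type} (X : Set (α → ℝ)) : Prop :=
  letI := predStructure P
  A.Definable (L.sum predLang) X

/-- `Y ⊆ ℝ^α` is `∅`-definable in `⟨ℝ̄, P⟩`, the expansion of the real ordered field
`ℝ̄ = ⟨ℝ, <, +, ·⟩` by a unary predicate for `P`. -/
def ZeroDefinableRealPair (P : Set ℝ) {α : Type} (Y : Set (α → ℝ)) : Prop :=
  letI := predStructure P
  (∅ : Set ℝ).Definable (realFieldLang.sum predLang) Y

/-! ### Definable closure and independence -/

/-- The definable closure of `A ⊆ ℝ` in the structure `𝓡` with language `L`: the set of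
reals `b` such that `{b}` is definable over `A`. -/
def dclR (L : FirstOrder.Language) [L.Structure ℝ] (A : Set ℝ) : Set ℝ :=
  {b | A.Definable L {x : Fin 1 → ℝ | x 0 = b}}

/-- The definable closure of `A ⊆ ℝ` in the pair `⟨𝓡, P⟩`. -/
def dclPair (L : FirstOrder.Language) [L.Structure ℝ] (P : Set ℝ) (A : Set ℝ) : Set ℝ :=
  {b | DefinablePair L P A {x : Fin 1 → ℝ | x 0 = b}}

/-- `X ⊆ ℝ` is dcl-independent over `A` (in `𝓡`). -/
def DclIndepOver (L : FirstOrder.Language) [L.Structure ℝ] (A : Set ℝ) (X : Set ℝ) : Prop :=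
  ∀ x ∈ X, x ∉ dclR L ((X \ {x}) ∪ A)

/-- `X ⊆ ℝ` is dcl-independent (in `𝓡`). -/
def DclIndep (L : FirstOrder.Language) [L.Structure ℝ] (X : Set ℝ) : Prop :=
  ∀ x ∈ X, x ∉ dclR L (X \ {x})

/-- `P` is the underlying set of an elementary substructure of `𝓡`. -/
def IsElemSubstructureSet (L : FirstOrder.Language) [L.Structure ℝ] (P : Set ℝ) : Prop :=
  ∃ S : L.ElementarySubstructure ℝ, (S : Set ℝ) = P

/-! ### O-minimality -/

/-- The structure on `ℝ` with language `L` is o-minimal: every definable (with parameters)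
subset of `ℝ` has finite frontier, i.e. it is a finite union of points and open intervals. -/
def IsOMinimal (L : FirstOrder.Language) [L.Structure ℝ] : Prop :=
  ∀ X : Set (Fin 1 → ℝ), (Set.univ : Set ℝ).Definable L X → (frontier X).Finite

/-! ### A-sets, algebraic parts and algebraic trace parts -/

/-- An `A`-set: an infinite connected semialgebraic subset of `ℝⁿ` definable over `A`.
(An `ℝ`-set is an `A`-set for `A = univ`.) -/
def IsASet (A : Set ℝ) {n : ℕ} (T : Set (Fin n → ℝ)) : Prop :=
  T.Infinite ∧ IsConnected T ∧ SemialgebraicOn A T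

/-- The algebraic part of `X` over `A`: the union of all `A`-subsets of `X`.
For `A = univ` this is the algebraic part `X^alg` of `X`. -/
def algPartOver (A : Set ℝ) {n : ℕ} (X : Set (Fin n → ℝ)) : Set (Fin n → ℝ) :=
  ⋃ T ∈ {T : Set (Fin n → ℝ) | IsASet A T ∧ T ⊆ X}, T

/-- The algebraic trace part of `X` over `A`: the union of all traces `X ∩ T` of `A`-sets `T`
in which `X` is dense.  For `A = univ` this is the algebraic trace part `X^alg_t` of `X`. -/
def algTracePart (A : Set ℝ) {n : ℕ} (X : Set (Fin n → ℝ)) : Set (Fin n → ℝ) :=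
  ⋃ T ∈ {T : Set (Fin n → ℝ) | IsASet A T ∧ T ⊆ closure (X ∩ T)}, X ∩ T

/-! ### Heights and point counting -/

/-- The Mahler measure of an integer polynomial: the absolute value of the leading coefficient
times the product of `max 1 |z|` over the complex roots `z` (with multiplicity). -/
def mahlerMeasureInt (f : Polynomial ℤ) : ℝ :=
  |(f.leadingCoeff : ℝ)| *
    (((f.map (Int.castRingHom ℂ)).roots).map (fun z => max 1 ‖z‖)).prod

/-- The primitive integer minimal polynomial of a real number `α` (zero if `α` is not
algebraic over `ℚ`). -/
def intMinpoly (α : ℝ) : Polynomial ℤ :=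
  (IsLocalization.integerNormalization (nonZeroDivisors ℤ) (minpoly ℚ α)).primPart

/-- The multiplicative height `H(α) = exp h(α)` of an algebraic real number `α`, where `h` is
the absolute logarithmic height: concretely, `H(α)` is the `d`-th root of the Mahler measure
of the primitive integer minimal polynomial of `α`, where `d = [ℚ(α) : ℚ]`. -/
def multHeight (α : ℝ) : ℝ :=
  (mahlerMeasureInt (intMinpoly α)) ^ (((minpoly ℚ α).natDegree : ℝ)⁻¹)

/-- `X(k, T)`: the set of points of `X` all of whose coordinates are algebraic of degree at
most `k` over `ℚ` and of multiplicative height at most `T`.  `N_k(X, T)` is its cardinality. -/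
def heightPoints {n : ℕ} (X : Set (Fin n → ℝ)) (k : ℕ) (T : ℝ) : Set (Fin n → ℝ) :=
  {x ∈ X | ∀ i, IsAlgebraic ℚ (x i) ∧ (minpoly ℚ (x i)).natDegree ≤ k ∧ multHeight (x i) ≤ T}

/-- `X` has few algebraic points: for every `k ≥ 1` and `ε > 0` there is a constant `C` with
`N_k(X, T) ≤ C · T ^ ε` for all `T > 1`. -/
def FewAlgebraicPoints {n : ℕ} (X : Set (Fin n → ℝ)) : Prop :=
  ∀ k : ℕ, 1 ≤ k → ∀ ε : ℝ, 0 < ε → ∃ C : ℝ, ∀ T : ℝ, 1 < T →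
    (heightPoints X k T).Finite ∧ ((heightPoints X k T).ncard : ℝ) ≤ C * T ^ ε

/-- `X` has many algebraic points: it does not have few algebraic points. -/
def ManyAlgebraicPoints {n : ℕ} (X : Set (Fin n → ℝ)) : Prop :=
  ¬ FewAlgebraicPoints X

/-- The set of algebraic points of `ℝⁿ`: points all of whose coordinates are algebraic
numbers. -/
def algebraicPoints {n : ℕ} : Set (Fin n → ℝ) :=
  {x | ∀ i, IsAlgebraic ℚ (x i)}

/-! ### Cells and dimension -/

/-- Cells in `ℝⁿ` with respect to a structure with language `L` on `ℝ`: the unique cell in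
`ℝ⁰` is the whole (one-point) space, and a cell in `ℝ^{n+1}` is a definable set which is
either the graph of a continuous function on a cell of `ℝⁿ`, or a band between two
continuous `ℝ ∪ {±∞}`-valued functions on a cell of `ℝⁿ`. -/
def IsCell (L : FirstOrder.Language) [L.Structure ℝ] : ∀ n : ℕ, Set (Fin n → ℝ) → Prop
  | 0, X => X = Set.univ
  | (n + 1), X =>
      (Set.univ : Set ℝ).Definable L X ∧
      ∃ C : Set (Fin n → ℝ), IsCell L n C ∧
        ((∃ f : (Fin n → ℝ) → ℝ, ContinuousOn f C ∧
            X = {x : Fin (n+1) → ℝ | Fin.init x ∈ C ∧ x (Fin.last n) = f (Fin.init x)}) ∨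
          (∃ f g : (Fin n → ℝ) → EReal, ContinuousOn f C ∧ ContinuousOn g C ∧
            (∀ y ∈ C, f y < g y) ∧
            X = {x : Fin (n+1) → ℝ | Fin.init x ∈ C ∧ f (Fin.init x) < (x (Fin.last n) : EReal) ∧
                  (x (Fin.last n) : EReal) < g (Fin.init x)}))

/-- An `ℝ`-set: an infinite connected semialgebraic subset of `ℝⁿ`. -/
def IsRSet {n : ℕ} (W : Set (Fin n → ℝ)) : Prop :=
  IsASet Set.univ W

/-- An `ℝ`-cell: an `ℝ`-set which is a (semialgebraic) cell. -/
def IsRCell {n : ℕ} (Z : Set (Fin n → ℝ)) : Prop :=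
  IsRSet Z ∧ IsCell realFieldLang n Z

/-- `X ⊆ ℝⁿ` has dimension at least `d`: some coordinate projection of `X` onto `ℝ^d` has
nonempty interior. -/
def hasDimGE {n : ℕ} (X : Set (Fin n → ℝ)) (d : ℕ) : Prop :=
  ∃ e : Fin d → Fin n, Function.Injective e ∧ (interior ((fun x => x ∘ e) '' X)).Nonempty

/-- The (o-minimal) dimension of `X ⊆ ℝⁿ`: the largest `d` such that some coordinate
projection of `X` onto `ℝ^d` has nonempty interior; the empty set has dimension `⊥ = -∞`. -/
def odim {n : ℕ} (X : Set (Fin n → ℝ)) : WithBot ℕ :=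
  @ite _ (X = ∅) (Classical.dec _) ⊥ ↑(sSup {d : ℕ | hasDimGE X d})

/-- An open box in `ℝⁿ`: a product of open intervals. -/
def IsOpenBox {n : ℕ} (B : Set (Fin n → ℝ)) : Prop :=
  ∃ a b : Fin n → ℝ, B = {x | ∀ i, x i ∈ Set.Ioo (a i) (b i)}

/-- The local dimension `dim_x(Z)` of `Z` at a point `x ∈ Z`: the minimum of `dim (B ∩ Z)`
over all open boxes `B` containing `x`. -/
def localDim {n : ℕ} (Z : Set (Fin n → ℝ)) (x : Fin n → ℝ) : ℕ :=
  sInf {d : ℕ | ∃ B, IsOpenBox B ∧ x ∈ B ∧ odim (B ∩ Z) = (d : WithBot ℕ)}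

/-! ### Definable functions -/

/-- A real-valued function `f` on `ℝ^α` is `L`-definable on the domain `D`: its graph over `D`
is a definable set. -/
def DefinableRealFunOn (L : FirstOrder.Language) [L.Structure ℝ] {α : Type}
    (D : Set (α → ℝ)) (f : (α → ℝ) → ℝ) : Prop :=
  (Set.univ : Set ℝ).Definable L
    {z : Option α → ℝ | (fun i => z (some i)) ∈ D ∧ z none = f (fun i => z (some i))}

/-- A map `f : ℝ^α → ℝ^β` is `L`-definable on the domain `D`: its graph over `D` is a
definable set. -/
def DefinableFunOn (L : FirstOrder.Language) [L.Structure ℝ] {α β : Type}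
    (D : Set (α → ℝ)) (f : (α → ℝ) → (β → ℝ)) : Prop :=
  (Set.univ : Set ℝ).Definable L
    {z : α ⊕ β → ℝ | (fun i => z (Sum.inl i)) ∈ D ∧
      (fun j => z (Sum.inr j)) = f (fun i => z (Sum.inl i))}

/-- A map `f : ℝ^α → ℝ^β` is definable in the pair `⟨𝓡, P⟩` on the domain `D`. -/
def DefinablePairFunOn (L : FirstOrder.Language) [L.Structure ℝ] (P : Set ℝ) {α β : Type}
    (D : Set (α → ℝ)) (f : (α → ℝ) → (β → ℝ)) : Prop :=
  DefinablePair L P Set.univ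
    {z : α ⊕ β → ℝ | (fun i => z (Sum.inl i)) ∈ D ∧
      (fun j => z (Sum.inr j)) = f (fun i => z (Sum.inl i))}

/-! ### Large and small sets -/

/-- `X ⊆ ℝⁿ` is large: for some `m` there is an `𝓛`-definable function `f : ℝ^{nm} → ℝ`
such that `f(X^m)` contains an open interval. -/
def IsLarge (L : FirstOrder.Language) [L.Structure ℝ] {n : ℕ} (X : Set (Fin n → ℝ)) : Prop :=
  ∃ (m : ℕ) (f : (Fin m × Fin n → ℝ) → ℝ),
    DefinableRealFunOn L Set.univ f ∧
    ∃ a b : ℝ, a < b ∧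
      Set.Ioo a b ⊆ f '' {z : Fin m × Fin n → ℝ | ∀ j : Fin m, (fun i => z (j, i)) ∈ X}

/-- `X ⊆ ℝⁿ` is small: it is not large. -/
def IsSmall (L : FirstOrder.Language) [L.Structure ℝ] {n : ℕ} (X : Set (Fin n → ℝ)) : Prop :=
  ¬ IsLarge L X

/-- A set `S ⊆ ℝ` of reals is small. -/
def IsSmall1 (L : FirstOrder.Language) [L.Structure ℝ] (S : Set ℝ) : Prop :=
  IsSmall L {x : Fin 1 → ℝ | x 0 ∈ S}

/-! ### Supercones and their shells -/

/-- `IsSuperconeShell L P k J Z`: `J ⊆ ℝ^k` is a supercone (definable in the pair `⟨𝓡, P⟩`)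
with shell `Z = sh(J)`.  `ℝ⁰` is a supercone with shell `ℝ⁰`; a definable `J ⊆ ℝ^{k+1}` is a
supercone if `π(J)` is a supercone with shell `Z'` and there are continuous
`h₁ < h₂ : sh(π(J)) → ℝ ∪ {±∞}` with `𝓛`-definable band `Z = (h₁, h₂)_{Z'}` such that every
fiber `J_a`, `a ∈ π(J)`, is contained and co-small in `(h₁(a), h₂(a))`. -/
def IsSuperconeShell (L : FirstOrder.Language) [L.Structure ℝ] (P : Set ℝ) :
    ∀ k : ℕ, Set (Fin k → ℝ) → Set (Fin k → ℝ) → Prop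
  | 0, J, Z => J = Set.univ ∧ Z = Set.univ
  | (k + 1), J, Z =>
      DefinablePair L P Set.univ J ∧
      ∃ Z' : Set (Fin k → ℝ), IsSuperconeShell L P k (Fin.init '' J) Z' ∧
        ∃ h₁ h₂ : (Fin k → ℝ) → EReal, ContinuousOn h₁ Z' ∧ ContinuousOn h₂ Z' ∧
          (∀ a ∈ Z', h₁ a < h₂ a) ∧
          Z = {x : Fin (k+1) → ℝ | Fin.init x ∈ Z' ∧ h₁ (Fin.init x) < (x (Fin.last k) : EReal) ∧
                (x (Fin.last k) : EReal) < h₂ (Fin.init x)} ∧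
          (Set.univ : Set ℝ).Definable L Z ∧
          ∀ a ∈ Fin.init '' J,
            {t : ℝ | Fin.snoc a t ∈ J} ⊆ {t : ℝ | h₁ a < (t : EReal) ∧ (t : EReal) < h₂ a} ∧
            IsSmall1 L ({t : ℝ | h₁ a < (t : EReal) ∧ (t : EReal) < h₂ a} \
              {t : ℝ | Fin.snoc a t ∈ J})

/-- `J ⊆ ℝ^k` is a supercone. -/
def IsSupercone (L : FirstOrder.Language) [L.Structure ℝ] (P : Set ℝ) (k : ℕ)
    (J : Set (Fin k → ℝ)) : Prop :=
  ∃ Z, IsSuperconeShell L P k J Z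

/-! ### Uniform families, cones and H-cones -/

/-- The fiber of a family `K ⊆ ℝ^{m+k}` over `g ∈ ℝ^m`. -/
def famFiber {m k : ℕ} (K : Set (Fin (m + k) → ℝ)) (g : Fin m → ℝ) : Set (Fin k → ℝ) :=
  {t | Fin.append g t ∈ K}

/-- The projection of `K ⊆ ℝⁿ` onto the first `j` coordinates. -/
def projFirst {n : ℕ} (j : ℕ) (h : j ≤ n) (K : Set (Fin n → ℝ)) : Set (Fin j → ℝ) :=
  (fun (x : Fin n → ℝ) (i : Fin j) => x (Fin.castLE h i)) '' K

/-- The first `m` coordinates of a point of `ℝ^{m+k}`. -/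
def firstPart {m k : ℕ} (z : Fin (m + k) → ℝ) : Fin m → ℝ :=
  fun i => z (Fin.castLE (Nat.le_add_right m k) i)

/-- `K = ⋃_{g ∈ S} {g} × J_g ⊆ ℝ^{m+k}` is a uniform definable family of supercones indexed
by `S`, with shell `V`: `V` is a cell containing `K` such that for every `g ∈ S` and
`0 < j ≤ k`, `cl(π_{m+j}(K)_g) = cl(π_{m+j}(V)_g)`. -/
def IsUniformFamilyShell (L : FirstOrder.Language) [L.Structure ℝ] (P : Set ℝ) (m k : ℕ)
    (S : Set (Fin m → ℝ)) (K V : Set (Fin (m + k) → ℝ)) : Prop :=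
  DefinablePair L P Set.univ K ∧
  projFirst m (Nat.le_add_right m k) K ⊆ S ∧
  (∀ g ∈ S, IsSupercone L P k (famFiber K g)) ∧
  IsCell L (m + k) V ∧ K ⊆ V ∧
  ∀ g ∈ S, ∀ j : ℕ, 0 < j → ∀ hj : j ≤ k,
    closure (famFiber (projFirst (m + j) (Nat.add_le_add_left hj m) K) g) =
      closure (famFiber (projFirst (m + j) (Nat.add_le_add_left hj m) V) g)

/-- `(S, K, V, h)` represents a `k`-cone in `ℝⁿ`: `S ⊆ ℝᵐ` is definable and small,
`K` is a uniform family of supercones over `S` with shell `V`, and `h : V → ℝⁿ` is an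
`𝓛`-definable continuous map which is injective on each fiber `V_g`, `g ∈ S`.  The cone
itself is the image `h(K)`. -/
def IsConeRep (L : FirstOrder.Language) [L.Structure ℝ] (P : Set ℝ) {m k n : ℕ}
    (S : Set (Fin m → ℝ)) (K V : Set (Fin (m + k) → ℝ))
    (h : (Fin (m + k) → ℝ) → (Fin n → ℝ)) : Prop :=
  DefinablePair L P Set.univ S ∧ IsSmall L S ∧
  IsUniformFamilyShell L P m k S K V ∧
  ContinuousOn h V ∧ DefinableFunOn L V h ∧
  ∀ g ∈ S, Set.InjOn (fun t : Fin k → ℝ => h (Fin.append g t)) (famFiber V g)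

/-- `C ⊆ ℝⁿ` is a `k`-cone. -/
def IsKCone (L : FirstOrder.Language) [L.Structure ℝ] (P : Set ℝ) (k : ℕ) {n : ℕ}
    (C : Set (Fin n → ℝ)) : Prop :=
  ∃ (m : ℕ) (S : Set (Fin m → ℝ)) (K V : Set (Fin (m + k) → ℝ))
    (h : (Fin (m + k) → ℝ) → (Fin n → ℝ)),
    IsConeRep L P S K V h ∧ C = h '' K

/-- `(S, K, V, h)` represents a `k`-H-cone: a `k`-cone with `S ⊆ Pᵐ` and `h` injective
on `K`. -/
def IsHConeRep (L : FirstOrder.Language) [L.Structure ℝ] (P : Set ℝ) {m k n : ℕ}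
    (S : Set (Fin m → ℝ)) (K V : Set (Fin (m + k) → ℝ))
    (h : (Fin (m + k) → ℝ) → (Fin n → ℝ)) : Prop :=
  IsConeRep L P S K V h ∧ (∀ g ∈ S, ∀ i, g i ∈ P) ∧ Set.InjOn h K

/-- The large dimension of `X ⊆ ℝⁿ`: the maximum `k` such that `X` contains a `k`-cone
(`⊥ = -∞` for the empty set). -/
def ldim (L : FirstOrder.Language) [L.Structure ℝ] (P : Set ℝ) {n : ℕ}
    (X : Set (Fin n → ℝ)) : WithBot ℕ :=
  @ite _ (X = ∅) (Classical.dec _) ⊥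
    ↑(sSup {k : ℕ | ∃ C : Set (Fin n → ℝ), C ⊆ X ∧ IsKCone L P k C})

/-!
If `T` is an `A`-set with `T ⊆ cl (X ∩ T)`, then `cl (X ∩ T) = cl T`, and taking closures
preserves `A`-sets: infiniteness and connectedness are clear, and `cl T` is again definable over
`A` since it is cut out by `∀ ε > 0, ∃ y ∈ T, ‖x - y‖∞ ≤ ε`. Conversely, if `Y ⊆ X` and `cl Y` is
an `A`-set, then `Y` lies in the trace `X ∩ cl Y`, which is dense in `cl Y`.
-/

theorem FirstOrder.Language.Term.definable_setOf_realize_le {L : Language} {M : Type*}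
    [L.Structure M] [L.IsOrdered] [LE M] [L.OrderedStructure M] {α : Type*} (A : Set M)
    (t₁ t₂ : L.Term α) : A.Definable L {v : α → M | t₁.realize v ≤ t₂.realize v} :=
  (empty_definable_iff.2 ⟨(t₁.relabel Sum.inl).le (t₂.relabel Sum.inl),
    by ext; simp [Formula.Realize]⟩).mono (empty_subset A)

instance : realFieldLang.OrderedStructure ℝ := ⟨fun _ => Iff.rfl⟩

theorem semialgebraicOn_setOf_nonpos (A : Set ℝ) {α : Type} (a : α) :
    SemialgebraicOn A {v : α → ℝ | v a ≤ 0} :=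
  (Term.var a : realFieldLang.Term α).definable_setOf_realize_le A (LHom.sumInl.onTerm 0)

theorem semialgebraicOn_setOf_le_add (A : Set ℝ) {α : Type} (a b c : α) :
    SemialgebraicOn A {v : α → ℝ | v a ≤ v b + v c} := by
  exact (Term.var a : realFieldLang.Term α).definable_setOf_realize_le A
    (LHom.sumInl.onTerm (Term.var b + Term.var c : Language.ring.Term α))

theorem mem_closure_iff_forall_exists_le_add {α : Type*} [Fintype α] {T : Set (α → ℝ)}
    {x : α → ℝ} :
    x ∈ closure T ↔ ∀ ε, 0 < ε → ∃ y ∈ T, ∀ i, y i ≤ x i + ε ∧ x i ≤ y i + ε := by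
  rw [mem_closure_iff_nhds_basis Metric.nhds_basis_closedBall]
  refine forall₂_congr fun ε hε => exists_congr fun y => and_congr_right fun _ => ?_
  simp only [Metric.mem_closedBall, dist_pi_le_iff hε.le, Real.dist_eq, abs_sub_le_iff,
    sub_le_iff_le_add']

theorem SemialgebraicOn.closure {A : Set ℝ} {α : Type} [Fintype α] {T : Set (α → ℝ)}
    (hT : SemialgebraicOn A T) : SemialgebraicOn A (closure T) := by
  -- coordinates `(x, ε, y)`; `E` says `y ∈ T` and `|xᵢ - yᵢ| ≤ ε` for all `i`
  let E : Set ((α ⊕ Unit) ⊕ α → ℝ) := {w | w ∘ Sum.inr ∈ T} ∩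
    ⋂ i, ({w | w (.inr i) ≤ w (.inl (.inl i)) + w (.inl (.inr ()))} ∩
      {w | w (.inl (.inl i)) ≤ w (.inr i) + w (.inl (.inr ()))})
  have hE : SemialgebraicOn A E :=
    (Definable.preimage_comp Sum.inr hT).inter <| definable_iInter_of_finite fun i =>
      (semialgebraicOn_setOf_le_add A _ _ _).inter (semialgebraicOn_setOf_le_add A _ _ _)
  have hS : SemialgebraicOn A
      ({u : α ⊕ Unit → ℝ | u (.inr ()) ≤ 0} ∪ {u | ∃ y, Sum.elim u y ∈ E}) :=
    (semialgebraicOn_setOf_nonpos A _).union (Definable.exists_of_finite hE)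
  show A.Definable realFieldLang _
  convert Definable.forall_of_finite hS using 1
  ext x
  simp only [mem_closure_iff_forall_exists_le_add, mem_ofPred_eq,
    (Equiv.funUnique Unit ℝ).forall_congr_left]
  simp [E, imp_iff_not_or]

theorem IsASet.closure {A : Set ℝ} {n : ℕ} {T : Set (Fin n → ℝ)} (hT : IsASet A T) :
    IsASet A (closure T) :=
  ⟨hT.1.mono subset_closure, hT.2.1.closure, hT.2.2.closure⟩

theorem algTracePart_alternative
    {n : ℕ} (A : Set ℝ) (X : Set (Fin n → ℝ)) :
    algTracePart A X = ⋃ Y ∈ {Y : Set (Fin n → ℝ) | Y ⊆ X ∧ IsASet A (closure Y)}, Y := by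
  ext x
  simp only [algTracePart, mem_iUnion, mem_ofPred_eq, exists_prop, mem_inter_iff]
  constructor
  · rintro ⟨T, ⟨hT, hT_dense⟩, hxX, hxT⟩
    have hcl : closure (X ∩ T) = closure T :=
      (closure_mono inter_subset_right).antisymm (closure_minimal hT_dense isClosed_closure)
    exact ⟨X ∩ T, ⟨inter_subset_left, hcl ▸ hT.closure⟩, hxX, hxT⟩
  · rintro ⟨Y, ⟨hYX, hY⟩, hxY⟩
    exact ⟨closure Y, ⟨hY, closure_mono (subset_inter hYX subset_closure)⟩, hYX hxY,
      subset_closure hxY⟩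

end
end

section
/- Let 𝓡 = ⟨ℝ, <, +, ·, …⟩ be an o-minimal expansion of the real ordered field and ⟨𝓡, P⟩ a dense pair, i.e., P is a dense proper elementary substructure of 𝓡. Let X = Y ∩ Pⁿ for some 𝓛-definable set Y ⊆ ℝⁿ. Then X ∩ Y^{alg_ℚ} ⊆ X^{alg_ℚ}_t. -/
open FirstOrder FirstOrder.Language Set Polynomial

noncomputable section

-- Agrees definitionally with the `Language.ring.Structure ℝ` instance fixed above.
instance : FirstOrder.Ring.CompatibleRing ℝ := FirstOrder.Ring.compatibleRingOfRing ℝ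

theorem Set.definable_Icc {L : Language} {M : Type*} [L.Structure M] [L.IsOrdered]
    [Preorder M] [L.OrderedStructure M] {A : Set M} {α : Type*} [Finite α] {a b : α → M}
    (ha : ∀ i, a i ∈ A) (hb : ∀ i, b i ∈ A) :
    A.Definable L (Icc a b) := by
  have hle (t₁ t₂ : L[[A]].Term α) : A.Definable L {x | t₁.realize x ≤ t₂.realize x} := by
    refine ⟨Relations.formula₂ ((L.lhomWithConstants A).onRelation leSymb) t₁ t₂, ?_⟩
    ext
    simp only [mem_ofPred_eq, Formula.realize_rel₂, LHom.map_onRelation, relMap_leSymb]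
    rfl
  have hIcc : Icc a b = ⋂ i, ({x | a i ≤ x i} ∩ {x | x i ≤ b i}) := by
    ext
    simp [Pi.le_def, forall_and]
  rw [hIcc]
  exact definable_iInter_of_finite fun i =>
    (hle (L.con (⟨a i, ha i⟩ : A)).term (.var i)).inter
      (hle (.var i) (L.con (⟨b i, hb i⟩ : A)).term)

theorem FirstOrder.Ring.definable_ratCast_singleton {K : Type*} [Field K] [CharZero K]
    [CompatibleRing K] (q : ℚ) :
    (∅ : Set K).Definable Language.ring {x : Fin 1 → K | x 0 = q} := by
  rw [Set.empty_definable_iff]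
  refine ⟨(termOfFreeCommRing (q.den * .of 0)).equal (termOfFreeCommRing q.num), ?_⟩
  ext x
  simp [Rat.cast_def, eq_div_iff, mul_comm]

namespace FirstOrder.Language.ElementarySubstructure

variable {L : Language}

theorem exists_forall_mem_of_definable {M : Type*} [L.Structure M]
    (S : L.ElementarySubstructure M) {α : Type*} [Finite α] {Z : Set (α → M)}
    (hZ : (S : Set M).Definable L Z) (hne : Z.Nonempty) :
    ∃ z ∈ Z, ∀ i, z i ∈ S := by
  rw [Set.definable_iff_exists_formula_sum] at hZ
  obtain ⟨ψ, rfl⟩ := hZ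
  obtain ⟨z, hz⟩ := hne
  let u : ↥(S : Set M) → S := fun a => ⟨a.1, a.2⟩
  have hM : (ψ.iExs α).Realize (S.subtype ∘ u) := Formula.realize_iExs.2 ⟨z, hz⟩
  obtain ⟨w, hw⟩ := Formula.realize_iExs.1 ((S.subtype.map_formula _ u).1 hM)
  refine ⟨fun i => w i, ?_, fun i => (w i).2⟩
  have h := (S.subtype.map_formula ψ (Sum.elim u w)).2 hw
  have hcomp : S.subtype ∘ Sum.elim u w = Sum.elim Subtype.val fun i => (w i : M) := by
    funext a
    cases a <;> rfl
  rwa [hcomp] at h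

theorem mem_of_definable_singleton {M : Type*} [L.Structure M]
    (S : L.ElementarySubstructure M) {a : M}
    (ha : (∅ : Set M).Definable L {x : Fin 1 → M | x 0 = a}) : a ∈ S := by
  obtain ⟨b, rfl, hb⟩ := S.meetsDefinable {a} (singleton_nonempty a) (ha.mono (empty_subset _))
  exact hb

variable [L.Structure ℝ] (S : L.ElementarySubstructure ℝ)

theorem subset_closure_inter_pi_of_dense (φ : realFieldLang →ᴸ L) [φ.IsExpansionOn ℝ]
    (hS : Dense (S : Set ℝ)) {α : Type*} [Fintype α]
    {T : Set (α → ℝ)} (hT : (S : Set ℝ).Definable L T) :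
    T ⊆ closure (T ∩ univ.pi fun _ => (S : Set ℝ)) := by
  intro y hy
  refine Metric.mem_closure_iff.2 fun ε hε => ?_
  choose a haS ha using fun i => hS.exists_between (sub_lt_self (y i) hε)
  choose b hbS hb using fun i => hS.exists_between (lt_add_of_pos_right (y i) hε)
  have hbox : (S : Set ℝ).Definable L (Icc a b) := (Set.definable_Icc haS hbS).map_expansion φ
  obtain ⟨z, ⟨hzT, hzab⟩, hzS⟩ := S.exists_forall_mem_of_definable (hT.inter hbox)
    ⟨y, hy, fun i => (ha i).2.le, fun i => (hb i).1.le⟩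
  refine ⟨z, ⟨hzT, fun i _ => hzS i⟩, (dist_pi_lt_iff hε).2 fun i => ?_⟩
  rw [Real.dist_eq, abs_lt]
  constructor <;> linarith [hzab.1 i, hzab.2 i, (ha i).1, (hb i).2]

theorem ratParams_subset (φ : realFieldLang →ᴸ L) [φ.IsExpansionOn ℝ] : ratParams ⊆ S := by
  rintro _ ⟨q, rfl⟩
  exact S.mem_of_definable_singleton
    (((Ring.definable_ratCast_singleton q).map_expansion LHom.sumInl).map_expansion φ)

end FirstOrder.Language.ElementarySubstructure

theorem inter_algPart_subset_algTracePart_general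
    (L : FirstOrder.Language) [L.Structure ℝ]
    (φ : realFieldLang →ᴸ L) [φ.IsExpansionOn ℝ]
    (P : Set ℝ) (hdense : Dense P)
    (helem : IsElemSubstructureSet L P)
    {n : ℕ} (Y : Set (Fin n → ℝ))
    (X : Set (Fin n → ℝ)) (hXY : X = Y ∩ {x | ∀ i, x i ∈ P}) :
    X ∩ algPartOver ratParams Y ⊆ algTracePart ratParams X := by
  obtain ⟨S, rfl⟩ := helem
  rintro x ⟨hxX, hxY⟩
  obtain ⟨T, ⟨hT, hTY⟩, hxT⟩ := mem_iUnion₂.1 hxY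
  have hTS : (S : Set ℝ).Definable L T :=
    (hT.2.2.map_expansion φ).mono (S.ratParams_subset φ)
  have hTX : T ⊆ closure (X ∩ T) := by
    refine (S.subset_closure_inter_pi_of_dense φ hdense hTS).trans (closure_mono ?_)
    rintro z ⟨hzT, hzS⟩
    exact ⟨hXY ▸ ⟨hTY hzT, fun i => hzS i trivial⟩, hzT⟩
  exact mem_iUnion₂.2 ⟨T, ⟨hT, hTX⟩, hxX, hxT⟩

theorem inter_algPart_subset_algTracePart
    (L : FirstOrder.Language) [L.Structure ℝ]
    (φ : realFieldLang →ᴸ L) [φ.IsExpansionOn ℝ]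
    (homin : IsOMinimal L)
    (P : Set ℝ) (hdense : Dense P)
    (helem : IsElemSubstructureSet L P) (hproper : P ≠ Set.univ)
    {n : ℕ} (Y : Set (Fin n → ℝ)) (hY : (Set.univ : Set ℝ).Definable L Y)
    (X : Set (Fin n → ℝ)) (hXY : X = Y ∩ {x | ∀ i, x i ∈ P}) :
    X ∩ algPartOver ratParams Y ⊆ algTracePart ratParams X :=
  inter_algPart_subset_algTracePart_general L φ P hdense helem Y X hXY

end
end
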